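/- For every σ ≥ 1 there exists a constant C > 0 depending only on p and σ such that for every σ-quasi-uniform partition of [a,b], every piecewise polynomial u^R = (P₀,…,P_N) of degree ≤ p with respect to it, every function u that is (p+1)-times continuously differentiable on [a,b], every index 0 ≤ i ≤ N, every point x_m ∈ [x_i, x_{i+1}], and every 0 ≤ k ≤ p, one has |P_i^{(k)}(x_m) − u^{(k)}(x_m)| ≤ C h^{−k} ( h^{p+1} |u|_{W^{p+1}_∞} + ‖u − u^R‖_{L^∞(a,b)} ). -/

import Mathlib

/-!
On an element `[c, d]` of length `δ`, compare `P_i` with the Taylor polynomial `T` of `u` at `c`.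
Taylor's theorem bounds `u⁽ᵏ⁾ - T⁽ᵏ⁾` by `|u|_{W^{p+1}_∞} δ^{p+1-k}`. The difference `P_i - T` is a
polynomial of degree `≤ p` bounded on `[c, d]` by `‖u - u^R‖_∞ + |u|_{W^{p+1}_∞} δ^{p+1}`, and an
inverse inequality `|Q⁽ᵏ⁾| ≤ C δ^{-k} sup_{[c,d]} |Q|` for such polynomials bounds its `k`-th
derivative. The inverse inequality holds on `[0, 1]` because `Q` is determined by its values at
`p + 1` fixed nodes through the Lagrange basis, and transfers to `[c, d]` by an affine change of
variables. Quasi-uniformity finally lets `δ` be replaced by the mesh size `h`.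
-/

open MeasureTheory

noncomputable section

/-- Maximal mesh size `h` of the partition `x 0 < x 1 < ... < x (N+1)`. -/
def meshH (N : ℕ) (x : ℕ → ℝ) : ℝ :=
  (Finset.range (N + 1)).sup' (Finset.nonempty_range_iff.mpr (Nat.succ_ne_zero N))
    (fun i => x (i + 1) - x i)

/-- Minimal mesh size `h_min`. -/
def meshHmin (N : ℕ) (x : ℕ → ℝ) : ℝ :=
  (Finset.range (N + 1)).inf' (Finset.nonempty_range_iff.mpr (Nat.succ_ne_zero N))
    (fun i => x (i + 1) - x i)

/-- Jump of the `k`-th derivative of the piecewise polynomial `P` at the node `x i`. -/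
def jumpD (P : ℕ → Polynomial ℝ) (x : ℕ → ℝ) (i k : ℕ) : ℝ :=
  (Polynomial.derivative^[k] (P i)).eval (x i)
    - (Polynomial.derivative^[k] (P (i - 1))).eval (x i)

/-- `L^∞` distance between `u` and the piecewise polynomial `u^R` defined by `P`. -/
def distLinf (N : ℕ) (x : ℕ → ℝ) (P : ℕ → Polynomial ℝ) (u : ℝ → ℝ) : ℝ :=
  (Finset.range (N + 1)).sup' (Finset.nonempty_range_iff.mpr (Nat.succ_ne_zero N))
    (fun i => sSup ((fun t => |u t - (P i).eval t|) '' Set.Icc (x i) (x (i + 1))))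

/-- Sobolev seminorm `|u|_{W^{p+1}_∞}` on `[a,b]`. -/
def semiWinf (p : ℕ) (a b : ℝ) (u : ℝ → ℝ) : ℝ :=
  sSup ((fun t => |iteratedDerivWithin (p + 1) u (Set.Icc a b) t|) '' Set.Icc a b)

open Set Polynomial
open scoped Nat

section IteratedDerivWithin

variable {𝕜 : Type*} [NontriviallyNormedField 𝕜] {F : Type*} [NormedAddCommGroup F]
  [NormedSpace 𝕜 F] {f : 𝕜 → F} {s t : Set 𝕜}

theorem iteratedDerivWithin_iteratedDerivWithin (m k : ℕ) :
    iteratedDerivWithin m (iteratedDerivWithin k f s) s = iteratedDerivWithin (m + k) f s := by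
  have hk : iteratedDerivWithin k f s = (fun g => derivWithin g s)^[k] f :=
    funext fun _ => iteratedDerivWithin_eq_iterate
  funext x
  rw [iteratedDerivWithin_eq_iterate, iteratedDerivWithin_eq_iterate, hk,
    Function.iterate_add_apply]

theorem iteratedDerivWithin_subset {n : ℕ} (st : s ⊆ t) (hs : UniqueDiffOn 𝕜 s)
    (ht : UniqueDiffOn 𝕜 t) (h : ContDiffOn 𝕜 n f t) {x : 𝕜} (hx : x ∈ s) :
    iteratedDerivWithin n f s x = iteratedDerivWithin n f t x := by
  simp only [iteratedDerivWithin_eq_iteratedFDerivWithin, iteratedFDerivWithin_subset st hs ht h hx]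

theorem ContDiffOn.iteratedDerivWithin {m k : ℕ} (hf : ContDiffOn 𝕜 (m + k : ℕ) f s)
    (hs : UniqueDiffOn 𝕜 s) : ContDiffOn 𝕜 m (iteratedDerivWithin k f s) s := by
  refine (contDiffOn_nat_iff_continuousOn_differentiableOn_deriv hs).2
    ⟨fun j hj => ?_, fun j hj => ?_⟩
  · rw [iteratedDerivWithin_iteratedDerivWithin]
    exact hf.continuousOn_iteratedDerivWithin (by exact_mod_cast (by omega : j + k ≤ m + k)) hs
  · rw [iteratedDerivWithin_iteratedDerivWithin]
    exact hf.differentiableOn_iteratedDerivWithin (by exact_mod_cast (by omega : j + k < m + k)) hs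

end IteratedDerivWithin

def taylorPoly (q : ℕ) (d : ℕ → ℝ) (c : ℝ) : ℝ[X] :=
  ∑ j ∈ Finset.range (q + 1), C (d j / j !) * (X - C c) ^ j

theorem eval_taylorPoly (q : ℕ) (d : ℕ → ℝ) (c t : ℝ) :
    (taylorPoly q d c).eval t = ∑ j ∈ Finset.range (q + 1), ((j ! : ℝ)⁻¹ * (t - c) ^ j) * d j := by
  simp only [taylorPoly, eval_finsetSum, eval_mul, eval_C, eval_pow, eval_sub, eval_X]
  exact Finset.sum_congr rfl fun j _ => by ring

theorem natDegree_taylorPoly_le (q : ℕ) (d : ℕ → ℝ) (c : ℝ) : (taylorPoly q d c).natDegree ≤ q := by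
  refine natDegree_sum_le_of_forall_le _ _ fun j hj => ?_
  refine (natDegree_C_mul_le _ _).trans ?_
  rw [natDegree_pow, natDegree_X_sub_C, mul_one]
  exact Nat.le_of_lt_succ (Finset.mem_range.mp hj)

theorem derivative_taylorPoly (q : ℕ) (d : ℕ → ℝ) (c : ℝ) :
    derivative (taylorPoly (q + 1) d c) = taylorPoly q (fun j => d (j + 1)) c := by
  rw [taylorPoly, derivative_sum, Finset.sum_range_succ', taylorPoly]
  simp only [derivative_C_mul, derivative_X_sub_C_pow, pow_zero, derivative_one, mul_zero, add_zero,
    Nat.add_sub_cancel, ← mul_assoc, ← C_mul]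
  refine Finset.sum_congr rfl fun j _ => ?_
  congr 2
  rw [Nat.factorial_succ]
  push_cast
  field_simp

theorem iterate_derivative_taylorPoly {k q : ℕ} (hk : k ≤ q) (d : ℕ → ℝ) (c : ℝ) :
    derivative^[k] (taylorPoly q d c) = taylorPoly (q - k) (fun j => d (j + k)) c := by
  induction k generalizing q d with
  | zero => rfl
  | succ k ih =>
    obtain ⟨q, rfl⟩ : ∃ q', q = q' + 1 := ⟨q - 1, by omega⟩
    rw [Function.iterate_succ_apply, derivative_taylorPoly, ih (by omega)]
    simp only [Nat.add_sub_add_right, add_assoc]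

theorem abs_sub_eval_taylorPoly_le {g : ℝ → ℝ} {a b c t M : ℝ} {q : ℕ}
    (hg : ContDiffOn ℝ (q + 1 : ℕ) g (Icc a b))
    (hM : ∀ y ∈ Icc a b, |iteratedDerivWithin (q + 1) g (Icc a b) y| ≤ M)
    (hac : a ≤ c) (hcb : c < b) (ht : t ∈ Icc c b) :
    |g t - (taylorPoly q (fun j => iteratedDerivWithin j g (Icc a b) c) c).eval t|
      ≤ M * (t - c) ^ (q + 1) / q ! := by
  have hsub : Icc c b ⊆ Icc a b := Icc_subset_Icc_left hac
  have hs : UniqueDiffOn ℝ (Icc c b) := uniqueDiffOn_Icc hcb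
  have hs' : UniqueDiffOn ℝ (Icc a b) := uniqueDiffOn_Icc (hac.trans_lt hcb)
  have hderiv : ∀ j ≤ q + 1, ∀ y ∈ Icc c b,
      iteratedDerivWithin j g (Icc c b) y = iteratedDerivWithin j g (Icc a b) y :=
    fun j hj y hy => iteratedDerivWithin_subset hsub hs hs' (hg.of_le (by exact_mod_cast hj)) hy
  have key := taylor_mean_remainder_bound hcb.le (hg.mono hsub) ht fun y hy => by
    rw [Real.norm_eq_abs, hderiv _ le_rfl y hy]
    exact hM y (hsub hy)
  rw [Real.norm_eq_abs, taylor_within_apply] at key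
  rwa [Finset.sum_congr rfl fun j hj => by
    rw [smul_eq_mul, hderiv j (by simp at hj; omega) c (left_mem_Icc.mpr hcb.le)],
    ← eval_taylorPoly] at key

theorem Nat.descFactorial_le_factorial (n k : ℕ) : n.descFactorial k ≤ n ! := by
  rcases le_or_gt k n with hkn | hnk
  · rw [← Nat.factorial_mul_descFactorial hkn]
    exact Nat.le_mul_of_pos_left _ (Nat.factorial_pos _)
  · simp [Nat.descFactorial_eq_zero_iff_lt.mpr hnk]

theorem iterate_derivative_comp_C_mul_X_add_C {R : Type*} [CommSemiring R] (Q : R[X]) (a b : R)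
    (k : ℕ) : derivative^[k] (Q.comp (C a * X + C b))
      = C (a ^ k) * (derivative^[k] Q).comp (C a * X + C b) := by
  induction k with
  | zero => simp
  | succ k ih =>
    rw [Function.iterate_succ_apply', ih, derivative_C_mul, derivative_comp,
      Function.iterate_succ_apply']
    simp only [derivative_add, derivative_C_mul_X, derivative_C, add_zero, pow_succ, C_mul]
    ring

theorem abs_eval_iterate_derivative_le_of_abs_le_one {f : ℝ[X]} {p : ℕ} (hf : f.natDegree ≤ p)
    (k : ℕ) {t : ℝ} (ht : |t| ≤ 1) :
    |(derivative^[k] f).eval t| ≤ p ! * ∑ j ∈ Finset.range (p + 1), |f.coeff j| := by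
  conv_lhs => rw [f.as_sum_range_C_mul_X_pow' (Nat.lt_succ_of_le hf)]
  rw [iterate_derivative_sum, eval_finsetSum, Finset.mul_sum]
  refine (Finset.abs_sum_le_sum_abs _ _).trans (Finset.sum_le_sum fun j hj => ?_)
  have hdesc : (j.descFactorial k : ℝ) ≤ p ! := by
    exact_mod_cast (Nat.descFactorial_le_factorial j k).trans
      (Nat.factorial_le (Nat.le_of_lt_succ (Finset.mem_range.mp hj)))
  rw [iterate_derivative_C_mul, iterate_derivative_X_pow_eq_C_mul]
  simp only [eval_mul, eval_C, eval_pow, eval_X, abs_mul, abs_pow, Nat.abs_cast]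
  rw [mul_comm]
  gcongr
  exact (mul_le_of_le_one_right (by positivity) (pow_le_one₀ (abs_nonneg t) ht)).trans hdesc

theorem exists_abs_eval_iterate_derivative_le_of_unitInterval (p : ℕ) :
    ∃ K, 0 ≤ K ∧ ∀ Q : ℝ[X], Q.natDegree ≤ p → ∀ S, (∀ t ∈ Icc (0 : ℝ) 1, |Q.eval t| ≤ S) →
      ∀ k, ∀ t ∈ Icc (0 : ℝ) 1, |(derivative^[k] Q).eval t| ≤ K * S := by
  set s := Finset.range (p + 1)
  set v : ℕ → ℝ := fun i => i / (p + 1)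
  have hv : Set.InjOn v s := fun i _ j _ hij => by
    simpa [v, div_left_inj' (by positivity : (p : ℝ) + 1 ≠ 0)] using hij
  have hvI : ∀ i ∈ s, v i ∈ Icc (0 : ℝ) 1 := fun i hi => by
    have : (i : ℝ) ≤ p := by exact_mod_cast Nat.le_of_lt_succ (Finset.mem_range.mp hi)
    exact ⟨by positivity, (div_le_one (by positivity)).2 (by linarith)⟩
  refine ⟨∑ i ∈ s, p ! * ∑ j ∈ s, |(Lagrange.basis s v i).coeff j|, by positivity,
    fun Q hQ S hS k t ht => ?_⟩
  have hdeg : Q.degree < s.card := by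
    rw [Finset.card_range]
    exact Q.degree_le_natDegree.trans_lt (by exact_mod_cast Nat.lt_succ_of_le hQ)
  have hQ_eq : derivative^[k] Q
      = ∑ i ∈ s, C (Q.eval (v i)) * derivative^[k] (Lagrange.basis s v i) := by
    conv_lhs => rw [Lagrange.eq_interpolate hv hdeg, Lagrange.interpolate_apply]
    simp only [iterate_derivative_sum, iterate_derivative_C_mul]
  rw [hQ_eq, eval_finsetSum, Finset.sum_mul]
  refine (Finset.abs_sum_le_sum_abs _ _).trans (Finset.sum_le_sum fun i hi => ?_)
  rw [eval_mul, eval_C, abs_mul, mul_comm]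
  have hbasis : (Lagrange.basis s v i).natDegree ≤ p := by
    rw [Lagrange.natDegree_basis hv hi, Finset.card_range, Nat.add_sub_cancel]
  have ht' : |t| ≤ 1 := abs_le.2 ⟨by linarith [ht.1], ht.2⟩
  exact mul_le_mul (abs_eval_iterate_derivative_le_of_abs_le_one hbasis k ht') (hS _ (hvI i hi))
    (abs_nonneg _) (by positivity)

theorem exists_abs_eval_iterate_derivative_le (p : ℕ) :
    ∃ K, 0 ≤ K ∧ ∀ Q : ℝ[X], Q.natDegree ≤ p → ∀ {c d : ℝ}, c < d →
      ∀ S, (∀ t ∈ Icc c d, |Q.eval t| ≤ S) →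
      ∀ k, ∀ t ∈ Icc c d, |(derivative^[k] Q).eval t| ≤ K * S / (d - c) ^ k := by
  obtain ⟨K, hK, hunit⟩ := exists_abs_eval_iterate_derivative_le_of_unitInterval p
  refine ⟨K, hK, fun Q hQ c d hcd S hS k t ht => ?_⟩
  have hδ : 0 < d - c := sub_pos.2 hcd
  set R := Q.comp (C (d - c) * X + C c)
  have hR_eval : ∀ s, R.eval s = Q.eval ((d - c) * s + c) := fun s => by simp [R]
  have hR_deg : R.natDegree ≤ p := by
    rwa [natDegree_comp, natDegree_linear hδ.ne', mul_one]
  have hR_bound : ∀ s ∈ Icc (0 : ℝ) 1, |R.eval s| ≤ S := fun s hs => by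
    rw [hR_eval]
    exact hS _ ⟨by nlinarith [hs.1], by nlinarith [hs.2]⟩
  have hs : (t - c) / (d - c) ∈ Icc (0 : ℝ) 1 :=
    ⟨div_nonneg (by linarith [ht.1]) hδ.le, (div_le_one hδ).2 (by linarith [ht.2])⟩
  have hkey := hunit R hR_deg S hR_bound k _ hs
  rw [iterate_derivative_comp_C_mul_X_add_C, eval_mul, eval_C, eval_comp] at hkey
  simp only [eval_add, eval_mul, eval_C, eval_X, mul_div_cancel₀ _ hδ.ne', sub_add_cancel,
    abs_mul, abs_pow, abs_of_pos hδ] at hkey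
  rw [le_div_iff₀ (pow_pos hδ k), mul_comm]
  exact hkey

theorem abs_eval_iterate_derivative_taylorPoly_sub_le {u : ℝ → ℝ} {a b c t M : ℝ} {p k : ℕ}
    (hu : ContDiffOn ℝ (p + 1 : ℕ) u (Icc a b))
    (hM : ∀ y ∈ Icc a b, |iteratedDerivWithin (p + 1) u (Icc a b) y| ≤ M)
    (hac : a ≤ c) (hcb : c < b) (ht : t ∈ Icc c b) (hk : k ≤ p) :
    |(derivative^[k] (taylorPoly p (fun j => iteratedDerivWithin j u (Icc a b) c) c)).eval t
        - iteratedDerivWithin k u (Icc a b) t| ≤ M * (t - c) ^ (p - k + 1) / (p - k) ! := by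
  have hpk : p - k + 1 + k = p + 1 := by omega
  have hg := ContDiffOn.iteratedDerivWithin (m := p - k + 1) (k := k) (by rwa [hpk])
    (uniqueDiffOn_Icc (hac.trans_lt hcb))
  rw [abs_sub_comm, iterate_derivative_taylorPoly hk]
  simpa only [iteratedDerivWithin_iteratedDerivWithin, hpk] using abs_sub_eval_taylorPoly_le hg
    (by simpa only [iteratedDerivWithin_iteratedDerivWithin, hpk] using hM) hac hcb ht

theorem abs_eval_iterate_derivative_taylorPoly_sub_le_div_pow {u : ℝ → ℝ} {a b c d t M : ℝ}
    {p k : ℕ} (hu : ContDiffOn ℝ (p + 1 : ℕ) u (Icc a b))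
    (hM : ∀ y ∈ Icc a b, |iteratedDerivWithin (p + 1) u (Icc a b) y| ≤ M)
    (hac : a ≤ c) (hcd : c < d) (hdb : d ≤ b) (ht : t ∈ Icc c d) (hk : k ≤ p) :
    |(derivative^[k] (taylorPoly p (fun j => iteratedDerivWithin j u (Icc a b) c) c)).eval t
        - iteratedDerivWithin k u (Icc a b) t| ≤ (d - c) ^ (p + 1) * M / (d - c) ^ k := by
  have hM0 : 0 ≤ M := (abs_nonneg _).trans (hM c ⟨hac, hcd.le.trans hdb⟩)
  have htc : 0 ≤ t - c := sub_nonneg.2 ht.1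
  calc _ ≤ M * (t - c) ^ (p - k + 1) / (p - k) ! :=
        abs_eval_iterate_derivative_taylorPoly_sub_le hu hM hac (hcd.trans_le hdb)
          ⟨ht.1, ht.2.trans hdb⟩ hk
    _ ≤ M * (t - c) ^ (p - k + 1) :=
        div_le_self (by positivity) (by exact_mod_cast (p - k).factorial_pos)
    _ ≤ M * (d - c) ^ (p - k + 1) := by gcongr; linarith [ht.2]
    _ = (d - c) ^ (p + 1) * M / (d - c) ^ k := by
        rw [eq_div_iff (pow_pos (sub_pos.2 hcd) k).ne', mul_assoc, ← pow_add,
          show p - k + 1 + k = p + 1 by omega, mul_comm]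

theorem exists_abs_eval_iterate_derivative_sub_iteratedDerivWithin_le (p : ℕ) :
    ∃ C, 0 < C ∧ ∀ {a b c d : ℝ}, a ≤ c → c < d → d ≤ b →
      ∀ {u : ℝ → ℝ} {M : ℝ}, ContDiffOn ℝ (p + 1 : ℕ) u (Icc a b) →
      (∀ y ∈ Icc a b, |iteratedDerivWithin (p + 1) u (Icc a b) y| ≤ M) →
      ∀ {Q : ℝ[X]} {E : ℝ}, Q.natDegree ≤ p → (∀ t ∈ Icc c d, |u t - Q.eval t| ≤ E) →
      ∀ k ≤ p, ∀ t ∈ Icc c d,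
      |(derivative^[k] Q).eval t - iteratedDerivWithin k u (Icc a b) t|
        ≤ C * ((d - c) ^ (p + 1) * M + E) / (d - c) ^ k := by
  obtain ⟨C, hC, hmarkov⟩ := exists_abs_eval_iterate_derivative_le p
  refine ⟨C + 1, by positivity, fun {a b c d} hac hcd hdb u M hu hM Q E hQ hE k hk t ht => ?_⟩
  have hE0 : 0 ≤ E := (abs_nonneg _).trans (hE c (left_mem_Icc.2 hcd.le))
  set T := taylorPoly p (fun j => iteratedDerivWithin j u (Icc a b) c) c
  have hQT : ∀ s ∈ Icc c d, |(Q - T).eval s| ≤ E + (d - c) ^ (p + 1) * M := fun s hs => by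
    have hT0 :=
      abs_eval_iterate_derivative_taylorPoly_sub_le_div_pow hu hM hac hcd hdb hs (Nat.zero_le p)
    simp only [Function.iterate_zero, id, iteratedDerivWithin_zero, pow_zero, div_one] at hT0
    rw [eval_sub]
    calc _ ≤ |u s - Q.eval s| + |T.eval s - u s| := by
          rw [abs_sub_comm (u s), abs_sub_comm (T.eval s)]
          exact abs_sub_le _ _ _
      _ ≤ _ := add_le_add (hE s hs) hT0
  have hQT_k := hmarkov (Q - T) ((natDegree_sub_le_of_le hQ (natDegree_taylorPoly_le _ _ _)).trans
    (max_self p).le) hcd _ hQT k t ht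
  rw [iterate_derivative_sub, eval_sub] at hQT_k
  calc _ ≤ |(derivative^[k] Q).eval t - (derivative^[k] T).eval t|
        + |(derivative^[k] T).eval t - iteratedDerivWithin k u (Icc a b) t| := abs_sub_le _ _ _
    _ ≤ C * (E + (d - c) ^ (p + 1) * M) / (d - c) ^ k + (d - c) ^ (p + 1) * M / (d - c) ^ k :=
        add_le_add hQT_k
          (abs_eval_iterate_derivative_taylorPoly_sub_le_div_pow hu hM hac hcd hdb ht hk)
    _ ≤ (C + 1) * ((d - c) ^ (p + 1) * M + E) / (d - c) ^ k := by
        rw [← add_div]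
        gcongr
        nlinarith

theorem div_pow_le_pow_mul_div_pow_of_le_mul {δ h σ M E : ℝ} {p k : ℕ} (hδ : 0 < δ)
    (hδh : δ ≤ h) (hhδ : h ≤ σ * δ) (hσ : 1 ≤ σ) (hk : k ≤ p) (hM : 0 ≤ M) (hE : 0 ≤ E) :
    (δ ^ (p + 1) * M + E) / δ ^ k ≤ σ ^ p * ((h ^ (p + 1) * M + E) / h ^ k) := by
  have hh : 0 < h := hδ.trans_le hδh
  calc (δ ^ (p + 1) * M + E) / δ ^ k ≤ (h ^ (p + 1) * M + E) / δ ^ k := by gcongr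
    _ ≤ σ ^ k * ((h ^ (p + 1) * M + E) / h ^ k) := by
        rw [mul_div_assoc', div_le_div_iff₀ (pow_pos hδ k) (pow_pos hh k), mul_comm (σ ^ k),
          mul_assoc, ← mul_pow]
        gcongr
    _ ≤ σ ^ p * ((h ^ (p + 1) * M + E) / h ^ k) := by
        gcongr

theorem Icc_subset_Icc_of_forall_lt_succ {x : ℕ → ℝ} {N i : ℕ} (hx : ∀ j ≤ N, x j < x (j + 1))
    (hi : i ≤ N) : Icc (x i) (x (i + 1)) ⊆ Icc (x 0) (x (N + 1)) := by
  have hmono : MonotoneOn x (Iic (N + 1)) :=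
    (strictMonoOn_Iic_of_lt_succ fun m hm => by simpa using hx m (by omega)).monotoneOn
  exact Icc_subset_Icc (hmono (by simp) (by simp; omega) (Nat.zero_le _))
    (hmono (by simp; omega) (by simp) (by omega))

theorem sub_le_meshH {N i : ℕ} (x : ℕ → ℝ) (hi : i ≤ N) : x (i + 1) - x i ≤ meshH N x :=
  Finset.le_sup' (fun j => x (j + 1) - x j) (Finset.mem_range.2 (by omega))

theorem meshHmin_le_sub {N i : ℕ} (x : ℕ → ℝ) (hi : i ≤ N) : meshHmin N x ≤ x (i + 1) - x i :=
  Finset.inf'_le (fun j => x (j + 1) - x j) (Finset.mem_range.2 (by omega))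

theorem abs_iteratedDerivWithin_le_semiWinf {p : ℕ} {a b : ℝ} {u : ℝ → ℝ} (hab : a < b)
    (hu : ContDiffOn ℝ (p + 1 : ℕ) u (Icc a b)) :
    ∀ y ∈ Icc a b, |iteratedDerivWithin (p + 1) u (Icc a b) y| ≤ semiWinf p a b u := fun _ hy =>
  le_csSup (isCompact_Icc.bddAbove_image
    (hu.continuousOn_iteratedDerivWithin le_rfl (uniqueDiffOn_Icc hab)).abs) (mem_image_of_mem _ hy)

theorem abs_sub_eval_le_distLinf {N i : ℕ} {x : ℕ → ℝ} {P : ℕ → ℝ[X]} {u : ℝ → ℝ} (hi : i ≤ N)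
    (hu : ContinuousOn u (Icc (x i) (x (i + 1)))) :
    ∀ t ∈ Icc (x i) (x (i + 1)), |u t - (P i).eval t| ≤ distLinf N x P u := fun t ht =>
  (le_csSup (isCompact_Icc.bddAbove_image (hu.sub (P i).continuousOn).abs)
    (mem_image_of_mem _ ht)).trans
    (Finset.le_sup' (fun j => sSup ((fun t => |u t - (P j).eval t|) '' Icc (x j) (x (j + 1))))
      (Finset.mem_range.2 (by omega)))

/-- Interior estimate (Theorem 3.2, `s = ∞` case): the difference of the `k`-th
derivatives of `u^R` and `u` at any point of any element is controlled by
`h^{-k} (h^{p+1} |u|_{W^{p+1}_∞} + ‖u - u^R‖_∞)`. -/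
theorem interior_derivative_difference_bound_linf (p : ℕ) (σ : ℝ) (hσ : 1 ≤ σ) :
    ∃ C : ℝ, 0 < C ∧
      ∀ (N : ℕ), 1 ≤ N → ∀ (a b : ℝ), a < b →
      ∀ (x : ℕ → ℝ), x 0 = a → x (N + 1) = b → (∀ i ≤ N, x i < x (i + 1)) →
      meshH N x ≤ σ * meshHmin N x →
      ∀ (P : ℕ → Polynomial ℝ), (∀ i ≤ N, (P i).natDegree ≤ p) →
      ∀ (u : ℝ → ℝ), ContDiffOn ℝ (p + 1 : ℕ) u (Set.Icc a b) →
      ∀ i ≤ N, ∀ xm ∈ Set.Icc (x i) (x (i + 1)), ∀ k ≤ p,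
      |(Polynomial.derivative^[k] (P i)).eval xm - iteratedDerivWithin k u (Set.Icc a b) xm| ≤
        C * (meshH N x ^ (p + 1) * semiWinf p a b u + distLinf N x P u) / meshH N x ^ k := by
  obtain ⟨C, hC, hlocal⟩ := exists_abs_eval_iterate_derivative_sub_iteratedDerivWithin_le p
  refine ⟨C * σ ^ p, by positivity, ?_⟩
  intro N _ a b hab x hx0 hxN hx hqu P hP u hu i hi xm hxm k hk
  subst hx0 hxN
  have hsub := Icc_subset_Icc_of_forall_lt_succ hx hi
  have hM := abs_iteratedDerivWithin_le_semiWinf hab hu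
  have hE := abs_sub_eval_le_distLinf (P := P) hi (hu.continuousOn.mono hsub)
  have hxi := hx i hi
  have hlocal_i := hlocal (hsub (left_mem_Icc.2 hxi.le)).1 hxi (hsub (right_mem_Icc.2 hxi.le)).2
    hu hM (hP i hi) hE k hk xm hxm
  refine hlocal_i.trans ?_
  rw [mul_div_assoc, mul_assoc, mul_div_assoc, mul_div_assoc]
  refine mul_le_mul_of_nonneg_left ?_ hC.le
  exact div_pow_le_pow_mul_div_pow_of_le_mul (sub_pos.2 hxi) (sub_le_meshH x hi)
    (hqu.trans (mul_le_mul_of_nonneg_left (meshHmin_le_sub x hi) (by linarith))) hσ hk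
    ((abs_nonneg _).trans (hM _ (left_mem_Icc.2 hab.le)))
    ((abs_nonneg _).trans (hE _ (left_mem_Icc.2 hxi.le)))
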